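/- Let φ and ψ be dual Riesz bases for H (ψ is the canonical dual Riesz basis of φ) and m ∈ ℓ^∞. Then the spectrum of M_{m,φ,ψ} equals the closure of the set {m_n : n ∈ ℕ} in ℂ. -/
import Mathlib


open scoped InnerProductSpace

/-- `φ` is a Riesz basis with bounds `A ≤ B`: it is complete and the ℓ²-synthesis
inequalities hold. -/
def IsRieszBasisWith {H : Type*} [NormedAddCommGroup H] [InnerProductSpace ℂ H]
    {ι : Type*} (φ : ι → H) (A B : ℝ) : Prop :=
  (Submodule.span ℂ (Set.range φ)).topologicalClosure = ⊤ ∧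
  ∀ c : ι → ℂ, Summable (fun n => ‖c n‖ ^ 2) →
    ∃ s : H, HasSum (fun n => c n • φ n) s ∧
      A * ∑' n, ‖c n‖ ^ 2 ≤ ‖s‖ ^ 2 ∧ ‖s‖ ^ 2 ≤ B * ∑' n, ‖c n‖ ^ 2

section Aux

variable {H : Type*} [NormedAddCommGroup H] [InnerProductSpace ℂ H]

/-- The upper Riesz bound is nonnegative. -/
lemma riesz_upper_nonneg (ψ : ℕ → H) (B : ℝ)
    (hsyn : ∀ c : ℕ → ℂ, Summable (fun n => ‖c n‖ ^ 2) →
      ∃ s : H, HasSum (fun n => c n • ψ n) s ∧ ‖s‖ ^ 2 ≤ B * ∑' n, ‖c n‖ ^ 2) :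
    0 ≤ B := by
  classical
  set c : ℕ → ℂ := fun n => if n = 0 then 1 else 0 with hc
  have hzero : ∀ n ∉ ({0} : Finset ℕ), ‖c n‖ ^ 2 = 0 := by
    intro n hn
    simp only [Finset.mem_singleton] at hn
    simp [hc, hn]
  have hsumm : Summable (fun n => ‖c n‖ ^ 2) := summable_of_ne_finset_zero hzero
  obtain ⟨s, _, hb⟩ := hsyn c hsumm
  have ht : ∑' n, ‖c n‖ ^ 2 = 1 := by
    rw [tsum_eq_sum hzero]
    simp [hc]
  rw [ht, mul_one] at hb
  exact le_trans (sq_nonneg _) hb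

/-- Bessel bound for the analysis coefficients coming from the upper synthesis bound. -/
lemma bessel_bound (ψ : ℕ → H) (B : ℝ) (hB : 0 ≤ B)
    (hsyn : ∀ c : ℕ → ℂ, Summable (fun n => ‖c n‖ ^ 2) →
      ∃ s : H, HasSum (fun n => c n • ψ n) s ∧ ‖s‖ ^ 2 ≤ B * ∑' n, ‖c n‖ ^ 2)
    (f : H) :
    Summable (fun n => ‖⟪ψ n, f⟫_ℂ‖ ^ 2) ∧ ∑' n, ‖⟪ψ n, f⟫_ℂ‖ ^ 2 ≤ B * ‖f‖ ^ 2 := by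
  classical
  have key : ∀ F : Finset ℕ, ∑ n ∈ F, ‖⟪ψ n, f⟫_ℂ‖ ^ 2 ≤ B * ‖f‖ ^ 2 := by
    intro F
    set c : ℕ → ℂ := fun n => if n ∈ F then ⟪ψ n, f⟫_ℂ else 0 with hc
    have hzero : ∀ n ∉ F, c n • ψ n = 0 := by intro n hn; simp [hc, hn]
    have hzero2 : ∀ n ∉ F, ‖c n‖ ^ 2 = 0 := by intro n hn; simp [hc, hn]
    have hsumm : Summable (fun n => ‖c n‖ ^ 2) := summable_of_ne_finset_zero hzero2
    obtain ⟨s, hs, hb⟩ := hsyn c hsumm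
    set S : ℝ := ∑ n ∈ F, ‖⟪ψ n, f⟫_ℂ‖ ^ 2 with hSdef
    have hSnonneg : 0 ≤ S := Finset.sum_nonneg fun n _ => sq_nonneg _
    have ht : ∑' n, ‖c n‖ ^ 2 = S := by
      rw [tsum_eq_sum hzero2]
      exact Finset.sum_congr rfl fun n hn => by simp [hc, hn]
    rw [ht] at hb
    -- identify s with the finite sum
    have hseq : s = ∑ n ∈ F, c n • ψ n := hs.unique (hasSum_sum_of_ne_finset_zero hzero)
    -- compute ⟪s, f⟫
    have hinner : ⟪s, f⟫_ℂ = (S : ℂ) := by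
      rw [hseq, sum_inner]
      rw [hSdef]
      push_cast
      refine Finset.sum_congr rfl fun n hn => ?_
      rw [inner_smul_left]
      simp only [hc, if_pos hn]
      rw [RCLike.conj_mul]
      norm_cast
    have hSle : S ≤ ‖s‖ * ‖f‖ := by
      have := norm_inner_le_norm (𝕜 := ℂ) s f
      rw [hinner] at this
      rwa [Complex.norm_real, Real.norm_of_nonneg hSnonneg] at this
    -- conclude S ≤ B * ‖f‖²
    rcases eq_or_lt_of_le hSnonneg with h0 | h0
    · have hS0 : S = 0 := hSdef.trans h0.symm
      rw [hS0]; positivity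
    · have h1 : S ^ 2 ≤ (‖s‖ * ‖f‖) ^ 2 := by
        apply pow_le_pow_left₀ hSnonneg hSle
      have h2 : (‖s‖ * ‖f‖) ^ 2 ≤ (B * S) * ‖f‖ ^ 2 := by
        rw [mul_pow]
        exact mul_le_mul_of_nonneg_right hb (sq_nonneg _)
      have h3 : S * S ≤ (B * ‖f‖ ^ 2) * S := by nlinarith
      exact le_of_mul_le_mul_right (by nlinarith) h0
  have hsummable : Summable (fun n => ‖⟪ψ n, f⟫_ℂ‖ ^ 2) :=
    summable_of_sum_le (fun n => sq_nonneg _) key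
  exact ⟨hsummable, Summable.tsum_le_of_sum_le hsummable key⟩

/-- Extract coefficients via biorthogonality. -/
lemma coeff_eq (φ ψ : ℕ → H)
    (hbiorth : ∀ n j : ℕ, ⟪ψ j, φ n⟫_ℂ = if n = j then 1 else 0)
    {c : ℕ → ℂ} {s : H} (h : HasSum (fun n => c n • φ n) s) (k : ℕ) :
    ⟪ψ k, s⟫_ℂ = c k := by
  classical
  have h1 : HasSum (fun n => ⟪ψ k, c n • φ n⟫_ℂ) ⟪ψ k, s⟫_ℂ :=
    (innerSL ℂ (ψ k)).hasSum h
  have h2 : (fun n => ⟪ψ k, c n • φ n⟫_ℂ) = fun n => if n = k then c k else 0 := by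
    funext n
    rw [inner_smul_right, hbiorth n k]
    by_cases hn : n = k <;> simp [hn]
  rw [h2] at h1
  exact h1.unique (hasSum_ite_eq k (c k))

/-- Construction of the bounded multiplier operator for a bounded symbol. -/
lemma multiplier_exists [CompleteSpace H] (φ ψ : ℕ → H) (Bφ Bψ : ℝ)
    (hBφ : 0 ≤ Bφ) (hBψ : 0 ≤ Bψ)
    (hφsyn : ∀ c : ℕ → ℂ, Summable (fun n => ‖c n‖ ^ 2) →
      ∃ s : H, HasSum (fun n => c n • φ n) s ∧ ‖s‖ ^ 2 ≤ Bφ * ∑' n, ‖c n‖ ^ 2)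
    (hbes : ∀ f : H, Summable (fun n => ‖⟪ψ n, f⟫_ℂ‖ ^ 2) ∧
      ∑' n, ‖⟪ψ n, f⟫_ℂ‖ ^ 2 ≤ Bψ * ‖f‖ ^ 2)
    (a : ℕ → ℂ) (C : ℝ) (hC : 0 ≤ C) (ha : ∀ n, ‖a n‖ ≤ C) :
    ∃ N : H →L[ℂ] H, ∀ f : H, HasSum (fun n => (a n * ⟪ψ n, f⟫_ℂ) • φ n) (N f) := by
  classical
  set K : ℝ := Bφ * (C ^ 2 * Bψ) with hK
  have hKnonneg : 0 ≤ K := mul_nonneg hBφ (mul_nonneg (sq_nonneg C) hBψ)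
  have key : ∀ f : H, ∃ s : H,
      HasSum (fun n => (a n * ⟪ψ n, f⟫_ℂ) • φ n) s ∧ ‖s‖ ^ 2 ≤ K * ‖f‖ ^ 2 := by
    intro f
    have hsq : ∀ n, ‖a n * ⟪ψ n, f⟫_ℂ‖ ^ 2 ≤ C ^ 2 * ‖⟪ψ n, f⟫_ℂ‖ ^ 2 := by
      intro n
      rw [norm_mul, mul_pow]
      exact mul_le_mul_of_nonneg_right
        (pow_le_pow_left₀ (norm_nonneg _) (ha n) 2) (sq_nonneg _)
    have hsumm : Summable (fun n => ‖a n * ⟪ψ n, f⟫_ℂ‖ ^ 2) :=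
      Summable.of_nonneg_of_le (fun n => sq_nonneg _) hsq ((hbes f).1.mul_left (C ^ 2))
    obtain ⟨s, hs, hb⟩ := hφsyn _ hsumm
    refine ⟨s, hs, ?_⟩
    have ht : ∑' n, ‖a n * ⟪ψ n, f⟫_ℂ‖ ^ 2 ≤ C ^ 2 * ∑' n, ‖⟪ψ n, f⟫_ℂ‖ ^ 2 := by
      calc ∑' n, ‖a n * ⟪ψ n, f⟫_ℂ‖ ^ 2
          ≤ ∑' n, C ^ 2 * ‖⟪ψ n, f⟫_ℂ‖ ^ 2 :=
            Summable.tsum_le_tsum hsq hsumm ((hbes f).1.mul_left (C ^ 2))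
        _ = C ^ 2 * ∑' n, ‖⟪ψ n, f⟫_ℂ‖ ^ 2 := tsum_mul_left
    have ht2 : C ^ 2 * ∑' n, ‖⟪ψ n, f⟫_ℂ‖ ^ 2 ≤ C ^ 2 * (Bψ * ‖f‖ ^ 2) :=
      mul_le_mul_of_nonneg_left (hbes f).2 (sq_nonneg C)
    calc ‖s‖ ^ 2 ≤ Bφ * ∑' n, ‖a n * ⟪ψ n, f⟫_ℂ‖ ^ 2 := hb
      _ ≤ Bφ * (C ^ 2 * (Bψ * ‖f‖ ^ 2)) :=
          mul_le_mul_of_nonneg_left (le_trans ht ht2) hBφ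
      _ = K * ‖f‖ ^ 2 := by rw [hK]; ring
  choose g hg hgb using key
  have hadd : ∀ f₁ f₂ : H, g (f₁ + f₂) = g f₁ + g f₂ := by
    intro f₁ f₂
    refine (hg (f₁ + f₂)).unique ?_
    have h2 : (fun n => (a n * ⟪ψ n, f₁ + f₂⟫_ℂ) • φ n)
        = fun n => (a n * ⟪ψ n, f₁⟫_ℂ) • φ n + (a n * ⟪ψ n, f₂⟫_ℂ) • φ n := by
      funext n
      rw [inner_add_right, mul_add, add_smul]
    rw [h2]
    exact (hg f₁).add (hg f₂)
  have hsmul : ∀ (r : ℂ) (f : H), g (r • f) = r • g f := by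
    intro r f
    refine (hg (r • f)).unique ?_
    have h2 : (fun n => (a n * ⟪ψ n, r • f⟫_ℂ) • φ n)
        = fun n => r • ((a n * ⟪ψ n, f⟫_ℂ) • φ n) := by
      funext n
      rw [inner_smul_right, smul_smul]
      congr 1
      ring
    rw [h2]
    exact (hg f).const_smul r
  let L : H →ₗ[ℂ] H :=
    { toFun := g, map_add' := hadd, map_smul' := hsmul }
  refine ⟨L.mkContinuous (Real.sqrt K) ?_, hg⟩
  intro f
  have h1 : ‖g f‖ ^ 2 ≤ (Real.sqrt K * ‖f‖) ^ 2 := by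
    rw [mul_pow, Real.sq_sqrt hKnonneg]
    exact hgb f
  calc ‖L f‖ = Real.sqrt (‖g f‖ ^ 2) := (Real.sqrt_sq (norm_nonneg _)).symm
    _ ≤ Real.sqrt ((Real.sqrt K * ‖f‖) ^ 2) := Real.sqrt_le_sqrt h1
    _ = Real.sqrt K * ‖f‖ := Real.sqrt_sq (by positivity)

end Aux

/-- for dual Riesz bases `φ, ψ` and `m ∈ ℓ^∞`, the spectrum of `M_{m,φ,ψ}`
equals the closure of `{m_n : n ∈ ℕ}`. -/
theorem spectrum_multiplier_dual_riesz_bases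
    {H : Type*} [NormedAddCommGroup H] [InnerProductSpace ℂ H] [CompleteSpace H]
    (φ ψ : ℕ → H)
    (hφ : ∃ A B : ℝ, 0 < A ∧ IsRieszBasisWith φ A B)
    (hψriesz : ∃ A B : ℝ, 0 < A ∧ IsRieszBasisWith ψ A B)
    (hbiorth : ∀ n j : ℕ, ⟪ψ j, φ n⟫_ℂ = if n = j then 1 else 0)
    (hdual : ∀ f : H, HasSum (fun n => ⟪ψ n, f⟫_ℂ • φ n) f)
    (m : ℕ → ℂ) (hm : ∃ C : ℝ, ∀ n, ‖m n‖ ≤ C)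
    (M : H →L[ℂ] H)
    (hM : ∀ f : H, HasSum (fun n => (m n * ⟪ψ n, f⟫_ℂ) • φ n) (M f)) :
    spectrum ℂ M = closure (Set.range m) := by
  classical
  obtain ⟨Aφ, Bφ, hAφ, _, hφsyn0⟩ := hφ
  obtain ⟨Aψ, Bψ, hAψ, _, hψsyn0⟩ := hψriesz
  have hφsyn : ∀ c : ℕ → ℂ, Summable (fun n => ‖c n‖ ^ 2) →
      ∃ s : H, HasSum (fun n => c n • φ n) s ∧ ‖s‖ ^ 2 ≤ Bφ * ∑' n, ‖c n‖ ^ 2 := by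
    intro c hc
    obtain ⟨s, h1, _, h3⟩ := hφsyn0 c hc
    exact ⟨s, h1, h3⟩
  have hψsyn : ∀ c : ℕ → ℂ, Summable (fun n => ‖c n‖ ^ 2) →
      ∃ s : H, HasSum (fun n => c n • ψ n) s ∧ ‖s‖ ^ 2 ≤ Bψ * ∑' n, ‖c n‖ ^ 2 := by
    intro c hc
    obtain ⟨s, h1, _, h3⟩ := hψsyn0 c hc
    exact ⟨s, h1, h3⟩
  have hBφ : 0 ≤ Bφ := riesz_upper_nonneg φ Bφ hφsyn
  have hBψ : 0 ≤ Bψ := riesz_upper_nonneg ψ Bψ hψsyn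
  have hbes : ∀ f : H, Summable (fun n => ‖⟪ψ n, f⟫_ℂ‖ ^ 2) ∧
      ∑' n, ‖⟪ψ n, f⟫_ℂ‖ ^ 2 ≤ Bψ * ‖f‖ ^ 2 := bessel_bound ψ Bψ hBψ hψsyn
  -- eigenvectors
  have hφne : ∀ k, φ k ≠ 0 := by
    intro k hk
    have := hbiorth k k
    rw [hk] at this
    simp at this
  have heig : ∀ k, M (φ k) = m k • φ k := by
    intro k
    refine (hM (φ k)).unique ?_
    have h2 : (fun n => (m n * ⟪ψ n, φ k⟫_ℂ) • φ n)
        = fun n => if n = k then m k • φ k else 0 := by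
      funext n
      rw [hbiorth k n]
      by_cases hn : n = k
      · subst hn; simp
      · have : ¬ (k = n) := fun h => hn h.symm
        simp [hn, this]
    rw [h2]
    exact hasSum_ite_eq k (m k • φ k)
  apply Set.Subset.antisymm
  · -- spectrum ⊆ closure (range m)
    intro lam hlam
    by_contra hlc
    -- get a uniform gap
    rw [Metric.mem_closure_iff] at hlc
    push_neg at hlc
    obtain ⟨ε, hε, hgap⟩ := hlc
    have hgap' : ∀ n, ε ≤ ‖lam - m n‖ := by
      intro n
      have := hgap (m n) ⟨n, rfl⟩
      rw [dist_eq_norm] at this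
      linarith [this]
    have hne : ∀ n, lam - m n ≠ 0 := by
      intro n h
      have := hgap' n
      rw [h, norm_zero] at this
      linarith
    set a : ℕ → ℂ := fun n => (lam - m n)⁻¹ with haa
    have haC : ∀ n, ‖a n‖ ≤ ε⁻¹ := by
      intro n
      rw [haa]
      simp only [norm_inv]
      exact inv_anti₀ hε (hgap' n)
    obtain ⟨N, hN⟩ := multiplier_exists φ ψ Bφ Bψ hBφ hBψ hφsyn hbes a ε⁻¹
      (by positivity) haC
    -- show N is a two-sided inverse of lam•1 - M
    have hmul1 : (algebraMap ℂ (H →L[ℂ] H) lam - M) * N = 1 := by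
      ext f
      have hg := hN f
      set g : H := N f with hgdef
      have hco : ∀ k, ⟪ψ k, g⟫_ℂ = a k * ⟪ψ k, f⟫_ℂ := fun k =>
        coeff_eq φ ψ hbiorth hg k
      have h1 : HasSum (fun n => (lam * ⟪ψ n, g⟫_ℂ) • φ n) (lam • g) := by
        have := (hdual g).const_smul lam
        simpa [smul_smul] using this
      have h2 := hM g
      have h3 : HasSum (fun n => ((lam - m n) * ⟪ψ n, g⟫_ℂ) • φ n) (lam • g - M g) := by
        have := h1.sub h2
        simpa [sub_mul, sub_smul] using this
      have h4 : (fun n => ((lam - m n) * ⟪ψ n, g⟫_ℂ) • φ n)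
          = fun n => ⟪ψ n, f⟫_ℂ • φ n := by
        funext n
        rw [hco n, ← mul_assoc, mul_inv_cancel₀ (hne n), one_mul]
      rw [h4] at h3
      have hfin : lam • g - M g = f := h3.unique (hdual f)
      simpa [ContinuousLinearMap.mul_apply, ContinuousLinearMap.sub_apply,
        Algebra.algebraMap_eq_smul_one] using hfin
    have hmul2 : N * (algebraMap ℂ (H →L[ℂ] H) lam - M) = 1 := by
      ext f
      set h : H := lam • f - M f with hhdef
      have hcoM : ∀ k, ⟪ψ k, M f⟫_ℂ = m k * ⟪ψ k, f⟫_ℂ := fun k =>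
        coeff_eq φ ψ hbiorth (hM f) k
      have hco : ∀ k, ⟪ψ k, h⟫_ℂ = (lam - m k) * ⟪ψ k, f⟫_ℂ := by
        intro k
        rw [hhdef, inner_sub_right, inner_smul_right, hcoM k, sub_mul]
      have hNh := hN h
      have h4 : (fun n => (a n * ⟪ψ n, h⟫_ℂ) • φ n)
          = fun n => ⟪ψ n, f⟫_ℂ • φ n := by
        funext n
        rw [hco n, ← mul_assoc, inv_mul_cancel₀ (hne n), one_mul]
      rw [h4] at hNh
      have hfin : N h = f := hNh.unique (hdual f)
      simpa [ContinuousLinearMap.mul_apply, ContinuousLinearMap.sub_apply,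
        Algebra.algebraMap_eq_smul_one, hhdef] using hfin
    have hunit : IsUnit (algebraMap ℂ (H →L[ℂ] H) lam - M) :=
      ⟨⟨algebraMap ℂ (H →L[ℂ] H) lam - M, N, hmul1, hmul2⟩, rfl⟩
    exact (spectrum.notMem_iff.mpr hunit) hlam
  · -- closure (range m) ⊆ spectrum
    refine closure_minimal ?_ (spectrum.isClosed M)
    rintro _ ⟨k, rfl⟩
    by_contra hk
    have hunit : IsUnit (algebraMap ℂ (H →L[ℂ] H) (m k) - M) :=
      spectrum.notMem_iff.mp hk
    obtain ⟨u, hu⟩ := hunit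
    have hzero : (algebraMap ℂ (H →L[ℂ] H) (m k) - M) (φ k) = 0 := by
      simp [ContinuousLinearMap.sub_apply, Algebra.algebraMap_eq_smul_one, heig k]
    have : φ k = 0 := by
      have h1 : (↑u⁻¹ * ↑u : H →L[ℂ] H) (φ k) = φ k := by
        rw [u.inv_mul]; simp
      rw [ContinuousLinearMap.mul_apply, hu, hzero, map_zero] at h1
      exact h1.symm
    exact hφne k this
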